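/- Let F : D⁴ → D⁴ be a continuous map with F(∂D⁴) ⊆ ∂D⁴. If the restriction F|∂D⁴ : ∂D⁴ → ∂D⁴ is homotopic to the identity of ∂D⁴ (through continuous self-maps of the sphere ∂D⁴), then F is homotopic to the identity of D⁴ through maps of pairs (D⁴, ∂D⁴). -/

import Mathlib

open Metric Set

lemma glue_closed {α β : Type*} [TopologicalSpace α] [TopologicalSpace β]
    {f : α → β} {A B : Set α} (hA : IsClosed A) (hB : IsClosed B)
    (hfA : ContinuousOn f A) (hfB : ContinuousOn f B) :
    ContinuousOn f (A ∪ B) := by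
  intro x hx
  apply ContinuousWithinAt.union
  · by_cases h : x ∈ A
    · exact hfA x h
    · exact continuousWithinAt_of_notMem_closure (by rwa [hA.closure_eq])
  · by_cases h : x ∈ B
    · exact hfB x h
    · exact continuousWithinAt_of_notMem_closure (by rwa [hB.closure_eq])

/-- Let `F : D⁴ → D⁴` be a continuous map with `F(∂D⁴) ⊆ ∂D⁴`. If the
restriction `F|∂D⁴` is homotopic to the identity of `∂D⁴` through continuous self-maps of
the sphere, then `F` is homotopic to the identity of `D⁴` through maps of pairs
`(D⁴, ∂D⁴)`. -/
theorem homotopic_to_identity_of_boundary_homotopic_to_identity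
    (F : EuclideanSpace ℝ (Fin 4) → EuclideanSpace ℝ (Fin 4))
    (hFc : ContinuousOn F (closedBall 0 1))
    (hFD : MapsTo F (closedBall 0 1) (closedBall 0 1))
    (hFS : MapsTo F (sphere 0 1) (sphere 0 1))
    (hbdy : ∃ G : ℝ → EuclideanSpace ℝ (Fin 4) → EuclideanSpace ℝ (Fin 4),
      ContinuousOn (fun p : ℝ × EuclideanSpace ℝ (Fin 4) => G p.1 p.2)
        (Icc 0 1 ×ˢ sphere 0 1) ∧
      (∀ t ∈ Icc (0:ℝ) 1, MapsTo (G t) (sphere 0 1) (sphere 0 1)) ∧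
      (∀ x ∈ sphere (0 : EuclideanSpace ℝ (Fin 4)) 1, G 0 x = F x) ∧
      (∀ x ∈ sphere (0 : EuclideanSpace ℝ (Fin 4)) 1, G 1 x = x)) :
    ∃ H : ℝ → EuclideanSpace ℝ (Fin 4) → EuclideanSpace ℝ (Fin 4),
      ContinuousOn (fun p : ℝ × EuclideanSpace ℝ (Fin 4) => H p.1 p.2)
        (Icc 0 1 ×ˢ closedBall 0 1) ∧
      (∀ t ∈ Icc (0:ℝ) 1, MapsTo (H t) (closedBall 0 1) (closedBall 0 1)) ∧
      (∀ t ∈ Icc (0:ℝ) 1, MapsTo (H t) (sphere 0 1) (sphere 0 1)) ∧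
      (∀ x ∈ closedBall (0 : EuclideanSpace ℝ (Fin 4)) 1, H 0 x = F x) ∧
      (∀ x ∈ closedBall (0 : EuclideanSpace ℝ (Fin 4)) 1, H 1 x = x) := by
  classical
  obtain ⟨G, hGc, hGS, hG0, hG1⟩ := hbdy
  -- the time-1/2 map
  set K : EuclideanSpace ℝ (Fin 4) → EuclideanSpace ℝ (Fin 4) := fun x =>
    if ‖x‖ ≤ 1/2 then F ((2:ℝ) • x) else G (2*‖x‖ - 1) (‖x‖⁻¹ • x) with hK
  refine ⟨fun t x => if t ≤ 1/2 then
      (if ‖x‖ ≤ 1 - t then F ((1-t)⁻¹ • x) else G (2*‖x‖ - 2 + 2*t) (‖x‖⁻¹ • x))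
    else (2-2*t) • K x + (2*t-1) • x, ?_, ?_, ?_, ?_, ?_⟩
  · -- continuity
    dsimp only
    have hKc : ContinuousOn K (closedBall (0:EuclideanSpace ℝ (Fin 4)) 1) := by
      have hsub : closedBall (0:EuclideanSpace ℝ (Fin 4)) 1 ⊆
          {x : EuclideanSpace ℝ (Fin 4) | ‖x‖ ≤ 1/2} ∪
          ({x : EuclideanSpace ℝ (Fin 4) | 1/2 ≤ ‖x‖} ∩ {x | ‖x‖ ≤ 1}) := by
        intro x hx
        rw [mem_closedBall_zero_iff] at hx
        by_cases h : ‖x‖ ≤ 1/2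
        · exact Or.inl h
        · exact Or.inr ⟨le_of_lt (not_le.1 h), hx⟩
      refine ContinuousOn.mono (glue_closed
        (isClosed_le continuous_norm continuous_const)
        ((isClosed_le continuous_const continuous_norm).inter
          (isClosed_le continuous_norm continuous_const)) ?_ ?_) hsub
      · refine ContinuousOn.congr (f := fun x => F ((2:ℝ) • x)) ?_ ?_
        · refine hFc.comp (continuous_const_smul (2:ℝ)).continuousOn ?_
          intro x hx
          rw [mem_closedBall_zero_iff, norm_smul, Real.norm_eq_abs,
            abs_of_nonneg (by norm_num : (0:ℝ) ≤ 2)]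
          have : ‖x‖ ≤ 1/2 := hx
          linarith
        · intro x hx
          rw [hK]
          dsimp only
          exact if_pos hx
      · refine ContinuousOn.congr (f := fun x => G (2*‖x‖ - 1) (‖x‖⁻¹ • x)) ?_ ?_
        · have : (fun x : EuclideanSpace ℝ (Fin 4) => G (2*‖x‖ - 1) (‖x‖⁻¹ • x)) =
              (fun p : ℝ × EuclideanSpace ℝ (Fin 4) => G p.1 p.2) ∘
              (fun x => (2*‖x‖ - 1, ‖x‖⁻¹ • x)) := rfl
          rw [this]
          apply hGc.comp
          · apply ContinuousOn.prodMk
            · exact ((continuous_const.mul continuous_norm).sub continuous_const).continuousOn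
            · refine ContinuousOn.smul (ContinuousOn.inv₀ continuous_norm.continuousOn ?_)
                continuous_id.continuousOn
              intro x hx
              have : (1:ℝ)/2 ≤ ‖x‖ := hx.1
              exact ne_of_gt (by linarith)
          · intro x hx
            have h1 : (1:ℝ)/2 ≤ ‖x‖ := hx.1
            have h2 : ‖x‖ ≤ 1 := hx.2
            have hne : ‖x‖ ≠ 0 := ne_of_gt (by linarith)
            constructor
            · exact ⟨by linarith, by linarith⟩
            · rw [mem_sphere_zero_iff_norm, norm_smul, norm_inv, norm_norm,
                inv_mul_cancel₀ hne]
        · intro x hx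
          have h1 : (1:ℝ)/2 ≤ ‖x‖ := hx.1
          rw [hK]
          dsimp only
          by_cases hc : ‖x‖ ≤ 1/2
          · have he : ‖x‖ = 1/2 := le_antisymm hc h1
            rw [if_pos hc]
            have e0 : 2*‖x‖ - 1 = 0 := by rw [he]; ring
            have e2 : ‖x‖⁻¹ • x = (2:ℝ) • x := by rw [he]; norm_num
            have hmem : (2:ℝ) • x ∈ sphere (0:EuclideanSpace ℝ (Fin 4)) 1 := by
              rw [mem_sphere_zero_iff_norm, norm_smul, Real.norm_eq_abs,
                abs_of_nonneg (by norm_num : (0:ℝ) ≤ 2), he]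
              norm_num
            rw [e0, e2, hG0 _ hmem]
          · rw [if_neg hc]
    set A1 : Set (ℝ × EuclideanSpace ℝ (Fin 4)) :=
      ({p | 0 ≤ p.1} ∩ {p | p.1 ≤ 1/2}) ∩ {p | ‖p.2‖ ≤ 1 - p.1} with hA1def
    set A2 : Set (ℝ × EuclideanSpace ℝ (Fin 4)) :=
      (({p | 0 ≤ p.1} ∩ {p | p.1 ≤ 1/2}) ∩ {p | 1 - p.1 ≤ ‖p.2‖}) ∩ {p | ‖p.2‖ ≤ 1} with hA2def
    set B : Set (ℝ × EuclideanSpace ℝ (Fin 4)) :=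
      ({p | 1/2 ≤ p.1} ∩ {p | p.1 ≤ 1}) ∩ {p | ‖p.2‖ ≤ 1} with hBdef
    have hA1 : IsClosed A1 :=
      ((isClosed_le continuous_const continuous_fst).inter
        (isClosed_le continuous_fst continuous_const)).inter
        (isClosed_le continuous_snd.norm (continuous_const.sub continuous_fst))
    have hA2 : IsClosed A2 :=
      (((isClosed_le continuous_const continuous_fst).inter
        (isClosed_le continuous_fst continuous_const)).inter
        (isClosed_le (continuous_const.sub continuous_fst) continuous_snd.norm)).inter
        (isClosed_le continuous_snd.norm continuous_const)
    have hB : IsClosed B :=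
      ((isClosed_le continuous_const continuous_fst).inter
        (isClosed_le continuous_fst continuous_const)).inter
        (isClosed_le continuous_snd.norm continuous_const)
    have hsub : Icc (0:ℝ) 1 ×ˢ closedBall (0:EuclideanSpace ℝ (Fin 4)) 1 ⊆ (A1 ∪ A2) ∪ B := by
      rintro ⟨t, x⟩ hp
      simp only [mem_prod, mem_Icc, mem_closedBall_zero_iff] at hp
      obtain ⟨⟨ht0, ht1⟩, hx⟩ := hp
      by_cases h : t ≤ 1/2
      · by_cases h2 : ‖x‖ ≤ 1 - t
        · exact Or.inl (Or.inl ⟨⟨ht0, h⟩, h2⟩)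
        · exact Or.inl (Or.inr ⟨⟨⟨ht0, h⟩, le_of_lt (not_le.1 h2)⟩, hx⟩)
      · exact Or.inr ⟨⟨le_of_lt (not_le.1 h), ht1⟩, hx⟩
    refine ContinuousOn.mono (glue_closed (hA1.union hA2) hB
      (glue_closed hA1 hA2 ?_ ?_) ?_ : ContinuousOn _ ((A1 ∪ A2) ∪ B)) hsub
    · -- on A1
      refine ContinuousOn.congr (f := fun p : ℝ × EuclideanSpace ℝ (Fin 4) =>
        F ((1 - p.1)⁻¹ • p.2)) ?_ ?_
      · have : (fun p : ℝ × EuclideanSpace ℝ (Fin 4) => F ((1 - p.1)⁻¹ • p.2)) =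
            F ∘ (fun p : ℝ × EuclideanSpace ℝ (Fin 4) => (1 - p.1)⁻¹ • p.2) := rfl
        rw [this]
        apply hFc.comp
        · refine ContinuousOn.smul
            (ContinuousOn.inv₀ (continuous_const.sub continuous_fst).continuousOn ?_)
            continuous_snd.continuousOn
          rintro p hp
          have h2 : p.1 ≤ 1/2 := hp.1.2
          exact ne_of_gt (show (0:ℝ) < 1 - p.1 by linarith)
        · intro p hp
          have h2 : p.1 ≤ 1/2 := hp.1.2
          have h3 : ‖p.2‖ ≤ 1 - p.1 := hp.2
          rw [mem_closedBall_zero_iff, norm_smul, Real.norm_eq_abs, abs_inv,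
            abs_of_nonneg (by linarith), inv_mul_eq_div, div_le_one (by linarith)]
          exact h3
      · intro p hp
        have h2 : p.1 ≤ 1/2 := hp.1.2
        have h3 : ‖p.2‖ ≤ 1 - p.1 := hp.2
        dsimp only
        rw [if_pos h2, if_pos h3]
    · -- on A2
      refine ContinuousOn.congr (f := fun p : ℝ × EuclideanSpace ℝ (Fin 4) =>
        G (2*‖p.2‖ - 2 + 2*p.1) (‖p.2‖⁻¹ • p.2)) ?_ ?_
      · have : (fun p : ℝ × EuclideanSpace ℝ (Fin 4) => G (2*‖p.2‖ - 2 + 2*p.1) (‖p.2‖⁻¹ • p.2)) =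
            (fun q : ℝ × EuclideanSpace ℝ (Fin 4) => G q.1 q.2) ∘
            (fun p : ℝ × EuclideanSpace ℝ (Fin 4) => (2*‖p.2‖ - 2 + 2*p.1, ‖p.2‖⁻¹ • p.2)) := rfl
        rw [this]
        apply hGc.comp
        · apply ContinuousOn.prodMk
          · exact (((continuous_const.mul continuous_snd.norm).sub continuous_const).add
              (continuous_const.mul continuous_fst)).continuousOn
          · refine ContinuousOn.smul
              (ContinuousOn.inv₀ continuous_snd.norm.continuousOn ?_)
              continuous_snd.continuousOn
            intro p hp
            have h2 : p.1 ≤ 1/2 := hp.1.1.2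
            have h3 : 1 - p.1 ≤ ‖p.2‖ := hp.1.2
            exact ne_of_gt (by linarith)
        · intro p hp
          have h1 : 0 ≤ p.1 := hp.1.1.1
          have h2 : p.1 ≤ 1/2 := hp.1.1.2
          have h3 : 1 - p.1 ≤ ‖p.2‖ := hp.1.2
          have h4 : ‖p.2‖ ≤ 1 := hp.2
          have hne : ‖p.2‖ ≠ 0 := ne_of_gt (by linarith)
          constructor
          · exact ⟨by linarith, by linarith⟩
          · rw [mem_sphere_zero_iff_norm, norm_smul, norm_inv, norm_norm,
              inv_mul_cancel₀ hne]
      · intro p hp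
        have h2 : p.1 ≤ 1/2 := hp.1.1.2
        have h3 : 1 - p.1 ≤ ‖p.2‖ := hp.1.2
        dsimp only
        rw [if_pos h2]
        by_cases hc : ‖p.2‖ ≤ 1 - p.1
        · have he : ‖p.2‖ = 1 - p.1 := le_antisymm hc h3
          rw [if_pos hc]
          have hne : ‖p.2‖ ≠ 0 := ne_of_gt (by rw [he]; linarith)
          have h0 : 2*‖p.2‖ - 2 + 2*p.1 = 0 := by rw [he]; ring
          have hunit : ‖p.2‖⁻¹ • p.2 ∈ sphere (0:EuclideanSpace ℝ (Fin 4)) 1 := by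
            rw [mem_sphere_zero_iff_norm, norm_smul, norm_inv, norm_norm,
              inv_mul_cancel₀ hne]
          have harg : (1 - p.1)⁻¹ • p.2 = ‖p.2‖⁻¹ • p.2 := by rw [he]
          rw [h0, hG0 _ hunit, harg]
        · rw [if_neg hc]
    · -- on B
      refine ContinuousOn.congr (f := fun p : ℝ × EuclideanSpace ℝ (Fin 4) =>
        (2 - 2*p.1) • K p.2 + (2*p.1 - 1) • p.2) ?_ ?_
      · apply ContinuousOn.add
        · refine ContinuousOn.smul
            ((continuous_const.sub (continuous_const.mul continuous_fst)).continuousOn) ?_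
          exact hKc.comp continuous_snd.continuousOn
            (fun p hp => mem_closedBall_zero_iff.2 hp.2)
        · exact ContinuousOn.smul
            (((continuous_const.mul continuous_fst).sub continuous_const).continuousOn)
            continuous_snd.continuousOn
      · intro p hp
        have h1 : (1:ℝ)/2 ≤ p.1 := hp.1.1
        dsimp only
        by_cases hc : p.1 ≤ 1/2
        · have he : p.1 = 1/2 := le_antisymm hc h1
          rw [if_pos hc, he, hK]
          dsimp only
          have e1 : (1:ℝ) - 1/2 = 1/2 := by norm_num
          have e2 : ((1:ℝ) - 1/2)⁻¹ = 2 := by norm_num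
          have e3 : 2*‖p.2‖ - 2 + 2*((1:ℝ)/2) = 2*‖p.2‖ - 1 := by ring
          have e4 : (2:ℝ) - 2*(1/2) = 1 := by norm_num
          have e5 : (2:ℝ)*(1/2) - 1 = 0 := by norm_num
          rw [e2, e3, e4, e5, e1, one_smul, zero_smul, add_zero]
        · rw [if_neg hc]
  · -- maps ball to ball
    rintro t ⟨ht0, ht1⟩ x hx
    dsimp only
    rw [mem_closedBall_zero_iff] at hx
    by_cases ht2 : t ≤ 1/2
    · rw [if_pos ht2]
      by_cases hx2 : ‖x‖ ≤ 1 - t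
      · rw [if_pos hx2]
        apply hFD
        rw [mem_closedBall_zero_iff, norm_smul, Real.norm_eq_abs, abs_inv,
          abs_of_nonneg (by linarith), inv_mul_eq_div, div_le_one (by linarith)]
        exact hx2
      · rw [if_neg hx2]
        push_neg at hx2
        have hxn : ‖x‖ ≠ 0 := ne_of_gt (by linarith)
        apply sphere_subset_closedBall
        apply hGS (2*‖x‖ - 2 + 2*t) ⟨by linarith, by linarith⟩
        rw [mem_sphere_zero_iff_norm, norm_smul, norm_inv, norm_norm,
          inv_mul_cancel₀ hxn]
    · rw [if_neg ht2]
      push_neg at ht2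
      have hKx : K x ∈ closedBall (0:EuclideanSpace ℝ (Fin 4)) 1 := by
        rw [hK]
        dsimp only
        by_cases hx2 : ‖x‖ ≤ 1/2
        · rw [if_pos hx2]
          apply hFD
          rw [mem_closedBall_zero_iff, norm_smul, Real.norm_eq_abs]
          rw [abs_of_nonneg (by norm_num : (0:ℝ) ≤ 2)]
          linarith
        · rw [if_neg hx2]
          push_neg at hx2
          have hxn : ‖x‖ ≠ 0 := ne_of_gt (by linarith)
          apply sphere_subset_closedBall
          apply hGS (2*‖x‖ - 1) ⟨by linarith, by linarith⟩
          rw [mem_sphere_zero_iff_norm, norm_smul, norm_inv, norm_norm,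
            inv_mul_cancel₀ hxn]
      exact (convex_closedBall (0:EuclideanSpace ℝ (Fin 4)) 1) hKx (mem_closedBall_zero_iff.2 hx)
        (by linarith) (by linarith) (by ring)
  · -- maps sphere to sphere
    rintro t ⟨ht0, ht1⟩ x hx
    dsimp only
    rw [mem_sphere_zero_iff_norm] at hx
    by_cases ht2 : t ≤ 1/2
    · rw [if_pos ht2]
      rcases eq_or_lt_of_le ht0 with h0 | h0
      · rw [if_pos (by rw [hx]; linarith)]
        have : (1 - t)⁻¹ • x = x := by rw [← h0]; norm_num
        rw [this]
        exact hFS (mem_sphere_zero_iff_norm.2 hx)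
      · rw [if_neg (by rw [hx]; intro h; linarith)]
        have hxi : ‖x‖⁻¹ • x = x := by rw [hx]; norm_num
        rw [hxi, hx]
        have : 2*(1:ℝ) - 2 + 2*t = 2*t := by ring
        rw [this]
        exact hGS (2*t) ⟨by linarith, by linarith⟩ (mem_sphere_zero_iff_norm.2 hx)
    · rw [if_neg ht2]
      push_neg at ht2
      have hKx : K x = x := by
        rw [hK]
        dsimp only
        rw [if_neg (by rw [hx]; norm_num)]
        have hxi : ‖x‖⁻¹ • x = x := by rw [hx]; norm_num
        rw [hxi, hx]
        have : 2*(1:ℝ) - 1 = 1 := by ring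
        rw [this]
        exact hG1 x (mem_sphere_zero_iff_norm.2 hx)
      rw [hKx, ← add_smul]
      have : (2 - 2*t) + (2*t - 1) = (1:ℝ) := by ring
      rw [this, one_smul]
      exact mem_sphere_zero_iff_norm.2 hx
  · -- H 0 = F
    intro x hx
    dsimp only
    rw [mem_closedBall_zero_iff] at hx
    rw [if_pos (by norm_num : (0:ℝ) ≤ 1/2), if_pos (by linarith : ‖x‖ ≤ 1 - 0)]
    norm_num
  · -- H 1 = id
    intro x hx
    dsimp only
    rw [if_neg (by norm_num : ¬ ((1:ℝ) ≤ 1/2))]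
    norm_num
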